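/- arXiv:2512.13273 — 3 statements merged into one kernel-verified Lean document; each statement's English description precedes it below -/
import Mathlib

section
/- Let D be a triangulated category and let t1 = (𝒰1,𝒱1), t2 = (𝒰2,𝒱2) be torsion pairs in D with t1 ≼ t2. If t = (𝒰,𝒱) is a torsion pair in D with t1 ≼ t ≼ t2, then (𝒰 ∩ 𝒱1, 𝒱 ∩ 𝒰2) is a torsion pair in the extension-closed subcategory ℋ = 𝒰2 ∩ 𝒱1, and moreover 𝒰1 * (𝒰 ∩ 𝒱1) = 𝒰 and (𝒱 ∩ 𝒰2) * 𝒱2 = 𝒱. -/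
/-! Both classes of a torsion pair `(𝒰, 𝒱)` are each other's orthogonals, hence extension-closed,
and the truncation triangles of `t` can be pushed into `𝒰₂` and `𝒱₁`: in a triangle
`X → A → Y → X[1]`, `A ∈ 𝒰` and `X[1] ∈ 𝒰` force `Y ∈ 𝒰`, while `A ∈ 𝒱` and `Y[-1] ∈ 𝒱` force
`X ∈ 𝒱`. The relation `t₁ ≼ t` is exactly what supplies `X[1] ∈ 𝒰` and, via the shift adjunction,
`𝒱[-1] ⊆ 𝒱₁`. -/

open CategoryTheory Category Limits Pretriangulated

universe v u

variable (D : Type u) [Category.{v} D] [Preadditive D] [HasZeroObject D]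
  [HasShift D ℤ] [∀ n : ℤ, (shiftFunctor D n).Additive]
  [Pretriangulated D] [HasBinaryBiproducts D]

/-- `shiftSet D S n` is the full subcategory `S[n]`: objects isomorphic to `X⟦n⟧`
with `X ∈ S`. -/
def shiftSet (S : Set D) (n : ℤ) : Set D :=
  {A | ∃ B ∈ S, Nonempty (A ≅ B⟦n⟧)}

/-- `starSet D X Y` is `X * Y`: the class of objects `A` admitting a distinguished
triangle `X → A → Y → X[1]` with `X ∈ 𝒳` and `Y ∈ 𝒴`. -/
def starSet (X Y : Set D) : Set D :=
  {A | ∃ (B C : D) (f : B ⟶ A) (g : A ⟶ C) (h : C ⟶ B⟦(1 : ℤ)⟧),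
    B ∈ X ∧ C ∈ Y ∧ Triangle.mk f g h ∈ distTriang D}

/-- `Hom(X, Y) = 0`: every morphism from an object of `X` to an object of `Y` is zero. -/
def homZero (X Y : Set D) : Prop :=
  ∀ A ∈ X, ∀ B ∈ Y, ∀ f : A ⟶ B, f = 0

/-- a class of objects closed under isomorphisms -/
def isoClosed (S : Set D) : Prop :=
  ∀ ⦃A B : D⦄, (A ≅ B) → A ∈ S → B ∈ S

/-- an additive full subcategory (closed under isomorphisms) which is closed under
direct summands -/
structure AdditiveClosed (S : Set D) : Prop where
  iso : isoClosed D S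
  zero : ∀ Z : D, IsZero Z → Z ∈ S
  sum : ∀ A ∈ S, ∀ B ∈ S, (A ⊞ B) ∈ S
  summand : ∀ A ∈ S, ∀ (X : D) (i : X ⟶ A) (p : A ⟶ X), i ≫ p = 𝟙 X → X ∈ S

/-- a torsion pair `(U, V)` in the triangulated category `D` -/
structure IsTorsionPair (U V : Set D) : Prop where
  addU : AdditiveClosed D U
  addV : AdditiveClosed D V
  hom_zero : homZero D U V
  cover : ∀ A : D, A ∈ starSet D U V

/-- `t₁ ≼ t₂` for torsion pairs in a triangulated category: `U₁ ⊆ U₂` and `U₁[1] ⊆ U₂`. -/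
def torsLE (U₁ U₂ : Set D) : Prop :=
  U₁ ⊆ U₂ ∧ shiftSet D U₁ 1 ⊆ U₂

/-- a torsion pair `(T, F)` in an (extension-closed) full subcategory `H` of `D`:
`T` and `F` are additive subcategories of `H` closed under direct summands,
`Hom(T, F) = 0`, and every object of `H` admits a distinguished triangle
`T → X → F → T[1]` with `T ∈ 𝒯`, `F ∈ ℱ`. -/
structure IsTorsionPairIn (H T F : Set D) : Prop where
  subT : T ⊆ H
  subF : F ⊆ H
  isoT : ∀ ⦃A B : D⦄, (A ≅ B) → A ∈ T → B ∈ H → B ∈ T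
  isoF : ∀ ⦃A B : D⦄, (A ≅ B) → A ∈ F → B ∈ H → B ∈ F
  zeroT : ∀ Z : D, IsZero Z → Z ∈ H → Z ∈ T
  zeroF : ∀ Z : D, IsZero Z → Z ∈ H → Z ∈ F
  sumT : ∀ A ∈ T, ∀ B ∈ T, (A ⊞ B) ∈ T
  sumF : ∀ A ∈ F, ∀ B ∈ F, (A ⊞ B) ∈ F
  summandT : ∀ A ∈ T, ∀ (X : D) (i : X ⟶ A) (p : A ⟶ X), i ≫ p = 𝟙 X → X ∈ H → X ∈ T
  summandF : ∀ A ∈ F, ∀ (X : D) (i : X ⟶ A) (p : A ⟶ X), i ≫ p = 𝟙 X → X ∈ H → X ∈ F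
  hom_zero : homZero D T F
  cover : ∀ A ∈ H, A ∈ starSet D T F

/-- an `s`-torsion pair in `H`: a torsion pair with moreover `Hom(T, F[-1]) = 0`. -/
structure IsSTorsionPairIn (H T F : Set D) extends IsTorsionPairIn D H T F : Prop where
  neg_hom_zero : ∀ A ∈ T, ∀ B ∈ F, ∀ f : A ⟶ B⟦(-1 : ℤ)⟧, f = 0

/-- the relation `≼` for torsion pairs in a subcategory `H`:
`Hom(T, F') = 0` and `Hom(T, F'[-1]) = 0`. -/
def torsLEIn (T F' : Set D) : Prop :=
  homZero D T F' ∧ homZero D T (shiftSet D F' (-1))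

/-- a `t`-structure `(L, G) = (S^{≤0}, S^{≥0})` on a triangulated (full) subcategory `S`
of `D` (take `S = Set.univ` for a `t`-structure on `D` itself). -/
structure IsTStructureOn (S L G : Set D) : Prop where
  subL : L ⊆ S
  subG : G ⊆ S
  isoL : ∀ ⦃A B : D⦄, (A ≅ B) → A ∈ L → B ∈ S → B ∈ L
  isoG : ∀ ⦃A B : D⦄, (A ≅ B) → A ∈ G → B ∈ S → B ∈ G
  hom_zero : homZero D L (shiftSet D G (-1))
  cover : ∀ A ∈ S, A ∈ starSet D L (shiftSet D G (-1))
  shiftL : L ⊆ shiftSet D L (-1)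
  shiftG : shiftSet D G (-1) ⊆ G

/-- a `t`-structure `(L, G) = (D^{≤0}, D^{≥0})` on `D`. -/
def IsTStructure (L G : Set D) : Prop := IsTStructureOn D Set.univ L G

/-- a triangulated full subcategory of `D`. -/
structure IsTriangulatedSub (S : Set D) : Prop where
  iso : isoClosed D S
  zero : ∀ Z : D, IsZero Z → Z ∈ S
  shift : ∀ (n : ℤ), ∀ A ∈ S, A⟦n⟧ ∈ S
  ext₂ : ∀ (T : Triangle D), (T ∈ distTriang D) → T.obj₁ ∈ S → T.obj₃ ∈ S → T.obj₂ ∈ S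

/-- an `m`-extended heart on `D`: a full subcategory of the form
`V^{≥ -(m-1)} ∩ V^{≤ 0}` for some `t`-structure `(V^{≤0}, V^{≥0})` on `D`. -/
def IsExtendedHeart (m : ℤ) (E : Set D) : Prop :=
  ∃ L G : Set D, IsTStructure D L G ∧ E = shiftSet D G (m - 1) ∩ L

/-- the relation `E₁ ≤ E₂` for `m`-extended hearts:
`E₁ ⊆ E₂[m] * E₂` and `E₂ ⊆ E₁ * E₁[-m]`. -/
def extHeartLE (m : ℤ) (E₁ E₂ : Set D) : Prop :=
  E₁ ⊆ starSet D (shiftSet D E₂ m) E₂ ∧ E₂ ⊆ starSet D E₁ (shiftSet D E₁ (-m))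

section TorsionPairs

variable {D}

omit [HasZeroObject D] [Pretriangulated D] [HasBinaryBiproducts D] in
lemma hom_shift_neg_one_eq_zero {x y : D} (h : ∀ g : x⟦(1 : ℤ)⟧ ⟶ y, g = 0)
    (f : x ⟶ y⟦(-1 : ℤ)⟧) : f = 0 := by
  apply (shiftFunctor D (1 : ℤ)).map_injective
  rw [Functor.map_zero, ← cancel_mono ((shiftFunctorCompIsoId D (-1 : ℤ) 1 (by omega)).hom.app y),
    zero_comp]
  exact h _

omit [HasBinaryBiproducts D] in
lemma starSet_mono {X X' Y Y' : Set D} (hX : X ⊆ X') (hY : Y ⊆ Y') :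
    starSet D X Y ⊆ starSet D X' Y' := by
  rintro A ⟨B, C, f, g, h, hB, hC, hT⟩
  exact ⟨B, C, f, g, h, hX hB, hY hC, hT⟩

namespace IsTorsionPair

variable {U V : Set D}

lemma mem_right_of_forall_hom_eq_zero (t : IsTorsionPair D U V) {A : D}
    (h : ∀ x ∈ U, ∀ f : x ⟶ A, f = 0) : A ∈ V := by
  obtain ⟨B, C, f, g, w, hB, hC, hT⟩ := t.cover A
  obtain ⟨r, hr⟩ := Triangle.yoneda_exact₂ _ hT (𝟙 A) (by change f ≫ 𝟙 A = 0; simp [h B hB f])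
  exact t.addV.summand C hC A g r hr.symm

lemma mem_left_of_forall_hom_eq_zero (t : IsTorsionPair D U V) {A : D}
    (h : ∀ y ∈ V, ∀ f : A ⟶ y, f = 0) : A ∈ U := by
  obtain ⟨B, C, f, g, w, hB, hC, hT⟩ := t.cover A
  obtain ⟨s, hs⟩ := Triangle.coyoneda_exact₂ _ hT (𝟙 A) (by change 𝟙 A ≫ g = 0; simp [h C hC g])
  exact t.addU.summand B hB A s f hs.symm

lemma starSet_left_subset (t : IsTorsionPair D U V) : starSet D U U ⊆ U := by
  rintro A ⟨B, C, f, g, h, hB, hC, hT⟩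
  refine t.mem_left_of_forall_hom_eq_zero fun y hy φ => ?_
  obtain ⟨ψ, rfl⟩ := Triangle.yoneda_exact₂ _ hT φ (t.hom_zero B hB y hy (f ≫ φ))
  rw [t.hom_zero C hC y hy ψ]; exact comp_zero

lemma starSet_right_subset (t : IsTorsionPair D U V) : starSet D V V ⊆ V := by
  rintro A ⟨B, C, f, g, h, hB, hC, hT⟩
  refine t.mem_right_of_forall_hom_eq_zero fun x hx φ => ?_
  obtain ⟨ψ, rfl⟩ := Triangle.coyoneda_exact₂ _ hT φ (t.hom_zero x hx C hC (φ ≫ g))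
  rw [t.hom_zero x hx B hB ψ]; exact zero_comp

lemma obj₃_mem_left (t : IsTorsionPair D U V) {X A Y : D}
    {f : X ⟶ A} {g : A ⟶ Y} {h : Y ⟶ X⟦(1 : ℤ)⟧} (hT : Triangle.mk f g h ∈ distTriang D)
    (hA : A ∈ U) (hX : X⟦(1 : ℤ)⟧ ∈ U) : Y ∈ U := by
  refine t.mem_left_of_forall_hom_eq_zero fun y hy φ => ?_
  obtain ⟨ψ, rfl⟩ := Triangle.yoneda_exact₃ _ hT φ (t.hom_zero A hA y hy (g ≫ φ))
  rw [t.hom_zero _ hX y hy ψ]; exact comp_zero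

lemma obj₁_mem_right (t : IsTorsionPair D U V) {X A Y : D}
    {f : X ⟶ A} {g : A ⟶ Y} {h : Y ⟶ X⟦(1 : ℤ)⟧} (hT : Triangle.mk f g h ∈ distTriang D)
    (hA : A ∈ V) (hY : Y⟦(-1 : ℤ)⟧ ∈ V) : X ∈ V := by
  refine t.mem_right_of_forall_hom_eq_zero fun x hx φ => ?_
  obtain ⟨ψ, rfl⟩ := Triangle.coyoneda_exact₂ _ (inv_rot_of_distTriang _ hT) φ
    (t.hom_zero x hx A hA (φ ≫ f))
  rw [t.hom_zero x hx _ hY ψ]; exact zero_comp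

end IsTorsionPair

namespace torsLE

variable {U₁ V₁ U₂ V₂ : Set D}

omit [Preadditive D] [HasZeroObject D] [∀ n : ℤ, (shiftFunctor D n).Additive]
  [Pretriangulated D] [HasBinaryBiproducts D] in
lemma shift_one_mem (h : torsLE D U₁ U₂) {x : D} (hx : x ∈ U₁) : x⟦(1 : ℤ)⟧ ∈ U₂ :=
  h.2 ⟨x, hx, ⟨Iso.refl _⟩⟩

lemma right_subset (h : torsLE D U₁ U₂) (t₁ : IsTorsionPair D U₁ V₁)
    (t₂ : IsTorsionPair D U₂ V₂) : V₂ ⊆ V₁ := fun _ hA =>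
  t₁.mem_right_of_forall_hom_eq_zero fun _ hx f => t₂.hom_zero _ (h.1 hx) _ hA f

lemma shift_neg_one_mem_right (h : torsLE D U₁ U₂) (t₁ : IsTorsionPair D U₁ V₁)
    (t₂ : IsTorsionPair D U₂ V₂) {y : D} (hy : y ∈ V₂) :
    y⟦(-1 : ℤ)⟧ ∈ V₁ :=
  t₁.mem_right_of_forall_hom_eq_zero fun _ hx =>
    hom_shift_neg_one_eq_zero fun g => t₂.hom_zero _ (h.shift_one_mem hx) y hy g

lemma starSet_left_inter_right_eq (h : torsLE D U₁ U₂) (t₁ : IsTorsionPair D U₁ V₁)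
    (t₂ : IsTorsionPair D U₂ V₂) : starSet D U₁ (U₂ ∩ V₁) = U₂ := by
  refine subset_antisymm
    ((starSet_mono h.1 Set.inter_subset_left).trans t₂.starSet_left_subset) fun A hA => ?_
  obtain ⟨u, v, f, g, w, hu, hv, hT⟩ := t₁.cover A
  have hv₂ : v ∈ U₂ := t₂.obj₃_mem_left hT hA (h.shift_one_mem hu)
  exact ⟨u, v, f, g, w, hu, ⟨hv₂, hv⟩, hT⟩

lemma starSet_right_inter_left_eq (h : torsLE D U₁ U₂) (t₁ : IsTorsionPair D U₁ V₁)
    (t₂ : IsTorsionPair D U₂ V₂) : starSet D (V₁ ∩ U₂) V₂ = V₁ := by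
  refine subset_antisymm
    ((starSet_mono Set.inter_subset_left (h.right_subset t₁ t₂)).trans t₁.starSet_right_subset)
    fun A hA => ?_
  obtain ⟨u, v, f, g, w, hu, hv, hT⟩ := t₂.cover A
  have hu₁ : u ∈ V₁ := t₁.obj₁_mem_right hT hA (h.shift_neg_one_mem_right t₁ t₂ hv)
  exact ⟨u, v, f, g, w, ⟨hu₁, hu⟩, hv, hT⟩

end torsLE

lemma IsTorsionPair.isTorsionPairIn_inter {U V P Q : Set D} (t : IsTorsionPair D U V)
    (hP : AdditiveClosed D P) (hQ : AdditiveClosed D Q) (hUP : U ⊆ P) (hVQ : V ⊆ Q)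
    (hcover : ∀ A ∈ P ∩ Q, A ∈ starSet D (U ∩ Q) (V ∩ P)) :
    IsTorsionPairIn D (P ∩ Q) (U ∩ Q) (V ∩ P) where
  subT _ hA := ⟨hUP hA.1, hA.2⟩
  subF _ hA := ⟨hA.2, hVQ hA.1⟩
  isoT _ _ e hA _ := ⟨t.addU.iso e hA.1, hQ.iso e hA.2⟩
  isoF _ _ e hA _ := ⟨t.addV.iso e hA.1, hP.iso e hA.2⟩
  zeroT Z hZ _ := ⟨t.addU.zero Z hZ, hQ.zero Z hZ⟩
  zeroF Z hZ _ := ⟨t.addV.zero Z hZ, hP.zero Z hZ⟩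
  sumT A hA B hB := ⟨t.addU.sum A hA.1 B hB.1, hQ.sum A hA.2 B hB.2⟩
  sumF A hA B hB := ⟨t.addV.sum A hA.1 B hB.1, hP.sum A hA.2 B hB.2⟩
  summandT A hA X i p hip _ := ⟨t.addU.summand A hA.1 X i p hip, hQ.summand A hA.2 X i p hip⟩
  summandF A hA X i p hip _ := ⟨t.addV.summand A hA.1 X i p hip, hP.summand A hA.2 X i p hip⟩
  hom_zero A hA B hB f := t.hom_zero A hA.1 B hB.1 f
  cover := hcover

end TorsionPairs

theorem stmt1 (U₁ V₁ U₂ V₂ U V : Set D)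
    (t₁ : IsTorsionPair D U₁ V₁) (t₂ : IsTorsionPair D U₂ V₂)
    (t : IsTorsionPair D U V)
    (h1t : torsLE D U₁ U) (ht2 : torsLE D U U₂) :
    IsTorsionPairIn D (U₂ ∩ V₁) (U ∩ V₁) (V ∩ U₂) ∧
    starSet D U₁ (U ∩ V₁) = U ∧ starSet D (V ∩ U₂) V₂ = V := by
  refine ⟨t.isTorsionPairIn_inter t₂.addU t₁.addV ht2.1 (h1t.right_subset t₁ t) ?_,
    h1t.starSet_left_inter_right_eq t₁ t, ht2.starSet_right_inter_left_eq t t₂⟩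
  rintro A ⟨hA₂, hA₁⟩
  obtain ⟨u, v, f, g, w, hu, hv, hT⟩ := t.cover A
  have hu₁ : u ∈ V₁ := t₁.obj₁_mem_right hT hA₁ (h1t.shift_neg_one_mem_right t₁ t hv)
  have hv₂ : v ∈ U₂ := t₂.obj₃_mem_left hT hA₂ (ht2.shift_one_mem hu)
  exact ⟨u, v, f, g, w, ⟨hu, hu₁⟩, ⟨hv, hv₂⟩, hT⟩
end

section
/- Let D be a triangulated category with a t-structure 𝒰 = (U^{≤0}, U^{≥0}), let m be a positive integer, and set m-ℋ = U^{≥-(m-1)} ∩ U^{≤0}. Then (m-ℋ[m] * m-ℋ) ∩ (m-ℋ * m-ℋ[-m]) = m-ℋ. -/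
open CategoryTheory Category Limits Pretriangulated

universe v u

variable (D : Type u) [Category.{v} D] [Preadditive D] [HasZeroObject D]
  [HasShift D ℤ] [∀ n : ℤ, (shiftFunctor D n).Additive]
  [Pretriangulated D] [HasBinaryBiproducts D]

/-! The classes `D^{≤n} := L[-n]` and `D^{≥n} := G[-n]` form a `TStructure`, whose parts are
closed under extensions. Objects of `ℋ[m]` lie in `D^{≤-m} ⊆ D^{≤0}` and objects of `ℋ[-m]` in
`D^{≥1} ⊆ D^{≥1-m}`, so `ℋ[m] * ℋ ⊆ D^{≤0}` and `ℋ * ℋ[-m] ⊆ D^{≥1-m}`. Conversely, the split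
triangles `0 → A → A` and `A → A → 0` put `ℋ` inside both products. -/

open ZeroObject Triangulated

section Shift

variable {C : Type*} [Category C] [HasShift C ℤ]

lemma mem_shiftSet_of_iso {S : Set C} {n : ℤ} {A B : C} (e : A ≅ B)
    (hA : A ∈ shiftSet C S n) : B ∈ shiftSet C S n := by
  obtain ⟨P, hP, ⟨e'⟩⟩ := hA
  exact ⟨P, hP, ⟨e.symm ≪≫ e'⟩⟩

lemma shift_mem_shiftSet {S : Set C} {a : ℤ} {A : C} (hA : A ∈ shiftSet C S a) (b c : ℤ)
    (h : a + b = c) : A⟦b⟧ ∈ shiftSet C S c := by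
  obtain ⟨P, hP, ⟨e⟩⟩ := hA
  exact ⟨P, hP, ⟨(shiftFunctor C b).mapIso e ≪≫ ((shiftFunctorAdd' C a b c h).app P).symm⟩⟩

lemma mem_shiftSet_zero_iff {S : Set C} (hS : isoClosed C S) {A : C} :
    A ∈ shiftSet C S 0 ↔ A ∈ S :=
  ⟨fun ⟨P, hP, ⟨e⟩⟩ => hS (e ≪≫ (shiftFunctorZero C ℤ).app P).symm hP,
    fun hA => ⟨A, hA, ⟨((shiftFunctorZero C ℤ).app A).symm⟩⟩⟩

end Shift

section Pretriangulated

variable {C : Type*} [Category C] [Preadditive C] [HasZeroObject C] [HasShift C ℤ]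
  [∀ n : ℤ, (shiftFunctor C n).Additive]

lemma zero_mem_shiftSet {S : Set C} (hS : (0 : C) ∈ S) (n : ℤ) : (0 : C) ∈ shiftSet C S n :=
  ⟨0, hS, ⟨(isZero_zero C).iso ((shiftFunctor C n).map_isZero (isZero_zero C))⟩⟩

variable [Pretriangulated C]

lemma mem_starSet_of_mem_left {X Y : Set C} {A : C} (hA : A ∈ X) (hY : (0 : C) ∈ Y) :
    A ∈ starSet C X Y :=
  ⟨A, 0, 𝟙 A, 0, 0, hA, hY, contractible_distinguished A⟩

lemma mem_starSet_of_mem_right {X Y : Set C} {A : C} (hX : (0 : C) ∈ X) (hA : A ∈ Y) :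
    A ∈ starSet C X Y :=
  ⟨0, A, 0, 𝟙 A, 0, hX, hA, contractible_distinguished₁ A⟩

end Pretriangulated

namespace CategoryTheory.Triangulated.TStructure

variable {C : Type*} [Category C] [Preadditive C] [HasZeroObject C] [HasShift C ℤ]
  [∀ n : ℤ, (shiftFunctor C n).Additive] [Pretriangulated C] (t : TStructure C)

lemma isLE_of_mem_starSet {X Y : Set C} {n : ℤ} {A : C} (hA : A ∈ starSet C X Y)
    (hX : ∀ B ∈ X, t.IsLE B n) (hY : ∀ B ∈ Y, t.IsLE B n) : t.IsLE A n := by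
  obtain ⟨B₁, B₃, f, g, h, hB₁, hB₃, hT⟩ := hA
  exact t.isLE₂ _ hT n (hX B₁ hB₁) (hY B₃ hB₃)

lemma isGE_of_mem_starSet {X Y : Set C} {n : ℤ} {A : C} (hA : A ∈ starSet C X Y)
    (hX : ∀ B ∈ X, t.IsGE B n) (hY : ∀ B ∈ Y, t.IsGE B n) : t.IsGE A n := by
  obtain ⟨B₁, B₃, f, g, h, hB₁, hB₃, hT⟩ := hA
  exact t.isGE₂ _ hT n (hX B₁ hB₁) (hY B₃ hB₃)

lemma isLE_of_mem_shiftSet {S : Set C} {n a : ℤ} {A : C} (hA : A ∈ shiftSet C S a)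
    (hS : ∀ B ∈ S, t.IsLE B n) : t.IsLE A (n - a) := by
  obtain ⟨B, hB, ⟨e⟩⟩ := hA
  have := hS B hB
  have := t.isLE_shift B n a (n - a)
  exact t.isLE_of_iso e.symm _

lemma isGE_of_mem_shiftSet {S : Set C} {n a : ℤ} {A : C} (hA : A ∈ shiftSet C S a)
    (hS : ∀ B ∈ S, t.IsGE B n) : t.IsGE A (n - a) := by
  obtain ⟨B, hB, ⟨e⟩⟩ := hA
  have := hS B hB
  have := t.isGE_shift B n a (n - a)
  exact t.isGE_of_iso e.symm _

def extendedHeart (m : ℤ) : Set C := {A | t.IsLE A 0 ∧ t.IsGE A (1 - m)}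

lemma zero_mem_extendedHeart (m : ℤ) : (0 : C) ∈ t.extendedHeart m :=
  ⟨inferInstance, inferInstance⟩

theorem starSet_inter_starSet_extendedHeart {m : ℤ} (hm : 0 ≤ m) :
    starSet C (shiftSet C (t.extendedHeart m) m) (t.extendedHeart m) ∩
      starSet C (t.extendedHeart m) (shiftSet C (t.extendedHeart m) (-m)) =
        t.extendedHeart m := by
  refine Set.Subset.antisymm (fun A ⟨hA₁, hA₂⟩ => ⟨?_, ?_⟩) fun A hA => ⟨?_, ?_⟩
  · refine t.isLE_of_mem_starSet hA₁ (fun B hB => ?_) fun B hB => hB.1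
    have := t.isLE_of_mem_shiftSet hB fun P hP => hP.1
    exact t.isLE_of_le B (0 - m) 0
  · refine t.isGE_of_mem_starSet hA₂ (fun B hB => hB.2) fun B hB => ?_
    have := t.isGE_of_mem_shiftSet hB fun P hP => hP.2
    exact t.isGE_of_ge B (1 - m) (1 - m - -m)
  · exact mem_starSet_of_mem_right (zero_mem_shiftSet (t.zero_mem_extendedHeart m) m) hA
  · exact mem_starSet_of_mem_left hA (zero_mem_shiftSet (t.zero_mem_extendedHeart m) (-m))

end CategoryTheory.Triangulated.TStructure

namespace IsTStructure

variable {C : Type*} [Category C] [Preadditive C] [HasZeroObject C] [HasShift C ℤ]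
  [∀ n : ℤ, (shiftFunctor C n).Additive] [Pretriangulated C] {L G : Set C}

lemma isoClosed_le (hU : IsTStructure C L G) : isoClosed C L :=
  fun _ B e h => IsTStructureOn.isoL hU e h (Set.mem_univ B)

lemma isoClosed_ge (hU : IsTStructure C L G) : isoClosed C G :=
  fun _ B e h => IsTStructureOn.isoG hU e h (Set.mem_univ B)

def toTStructure (hU : IsTStructure C L G) : TStructure C where
  le n X := X ∈ shiftSet C L (-n)
  ge n X := X ∈ shiftSet C G (-n)
  le_isClosedUnderIsomorphisms _ := ⟨mem_shiftSet_of_iso⟩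
  ge_isClosedUnderIsomorphisms _ := ⟨mem_shiftSet_of_iso⟩
  le_shift n a n' h _ hX := shift_mem_shiftSet hX a (-n') (by omega)
  ge_shift n a n' h _ hX := shift_mem_shiftSet hX a (-n') (by omega)
  zero' _ _ f hX hY := by
    rw [neg_zero, mem_shiftSet_zero_iff hU.isoClosed_le] at hX
    exact IsTStructureOn.hom_zero hU _ hX _ hY f
  le_zero_le X hX := by
    rw [neg_zero, mem_shiftSet_zero_iff hU.isoClosed_le] at hX
    exact IsTStructureOn.shiftL hU hX
  ge_one_le X hX := by
    change X ∈ shiftSet C G (-0)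
    rw [neg_zero, mem_shiftSet_zero_iff hU.isoClosed_ge]
    exact IsTStructureOn.shiftG hU hX
  exists_triangle_zero_one A := by
    obtain ⟨B, B', f, g, h, hB, hB', hT⟩ := IsTStructureOn.cover hU A (Set.mem_univ A)
    refine ⟨B, B', ?_, hB', f, g, h, hT⟩
    rw [neg_zero, mem_shiftSet_zero_iff hU.isoClosed_le]
    exact hB

lemma extendedHeart_toTStructure (hU : IsTStructure C L G) (m : ℤ) :
    hU.toTStructure.extendedHeart m = shiftSet C G (m - 1) ∩ L := by
  ext A
  rw [Set.mem_inter_iff, and_comm, ← mem_shiftSet_zero_iff hU.isoClosed_le, ← neg_zero,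
    show m - 1 = -(1 - m) by ring]
  exact ⟨fun ⟨hL, hG⟩ => ⟨hL.le, hG.ge⟩, fun ⟨hL, hG⟩ => ⟨⟨hL⟩, ⟨hG⟩⟩⟩

end IsTStructure

/-- Lemma 4.3 (3): `(m-ℋ[m] * m-ℋ) ∩ (m-ℋ * m-ℋ[-m]) = m-ℋ`. -/
theorem stmt10 (L G : Set D) (hU : IsTStructure D L G) (m : ℤ) (hm : 1 ≤ m)
    (H : Set D) (hH : H = shiftSet D G (m - 1) ∩ L) :
    starSet D (shiftSet D H m) H ∩ starSet D H (shiftSet D H (-m)) = H := by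
  rw [hH, ← hU.extendedHeart_toTStructure m]
  exact hU.toTStructure.starSet_inter_starSet_extendedHeart (by omega)
end

section
/- Let D be a triangulated category with a t-structure 𝒰 = (U^{≤0}, U^{≥0}), let m be a positive integer, and set m-ℋ = U^{≥-(m-1)} ∩ U^{≤0}. If (𝒯,ℱ) is an s-torsion pair in m-ℋ, then ℱ[m] * 𝒯 ⊆ m-ℋ[m] * m-ℋ and m-ℋ ⊆ (ℱ[m] * 𝒯) * ((ℱ[m] * 𝒯)[-m]). -/
open CategoryTheory Category Limits Pretriangulated

universe v u

variable (D : Type u) [Category.{v} D] [Preadditive D] [HasZeroObject D]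
  [HasShift D ℤ] [∀ n : ℤ, (shiftFunctor D n).Additive]
  [Pretriangulated D] [HasBinaryBiproducts D]

/-! The only object the argument needs is `0`. It lies in `m-ℋ`, hence in `𝒯` and in `ℱ`, so it is
a neutral factor for `*` on either side. A torsion triangle `T → X → F → T[1]` of `X ∈ m-ℋ` then
already shows `X ∈ (ℱ[m] * 𝒯) * ((ℱ[m] * 𝒯)[-m])`, because `T ∈ 0[m] * 𝒯` and `F[m] ∈ ℱ[m] * 0`.
That `0 ∈ m-ℋ` comes from the `t`-structure: the truncation triangle `A → 0 → B → A[1]` gives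
`B ≅ A[1] ∈ U^{≤0} ∩ U^{≥1}`, so `A` and `B` vanish. -/

open ZeroObject

section Shift

variable {C : Type*} [Category C] [HasShift C ℤ]

lemma shift_mem_shiftSet_s16 {S : Set C} {X : C} (hX : X ∈ S) (n : ℤ) : X⟦n⟧ ∈ shiftSet C S n :=
  ⟨X, hX, ⟨Iso.refl _⟩⟩

lemma mem_shiftSet_neg_of_shift_mem {S : Set C} {X : C} {n : ℤ} (hX : X⟦n⟧ ∈ S) :
    X ∈ shiftSet C S (-n) :=
  ⟨X⟦n⟧, hX, ⟨((shiftFunctorCompIsoId C n (-n) (add_neg_cancel n)).app X).symm⟩⟩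

lemma mem_shiftSet_of_isZero [HasZeroMorphisms C]
    [∀ n : ℤ, (shiftFunctor C n).PreservesZeroMorphisms] {S : Set C} {Z : C} (hZ : IsZero Z)
    (hS : Z ∈ S) (n : ℤ) : Z ∈ shiftSet C S n :=
  ⟨Z, hS, ⟨hZ.iso ((shiftFunctor C n).map_isZero hZ)⟩⟩

lemma shiftSet_mono {S S' : Set C} (h : S ⊆ S') (n : ℤ) : shiftSet C S n ⊆ shiftSet C S' n :=
  fun _ ⟨X, hX, e⟩ => ⟨X, h hX, e⟩

end Shift

section Pretriangulated

variable {C : Type*} [Category C] [Preadditive C] [HasZeroObject C] [HasShift C ℤ]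
  [∀ n : ℤ, (shiftFunctor C n).Additive] [Pretriangulated C]

lemma starSet_mono_s16 {𝒳 𝒳' 𝒴 𝒴' : Set C} (h𝒳 : 𝒳 ⊆ 𝒳') (h𝒴 : 𝒴 ⊆ 𝒴') :
    starSet C 𝒳 𝒴 ⊆ starSet C 𝒳' 𝒴' :=
  fun _ ⟨X, Y, f, g, h, hX, hY, hT⟩ => ⟨X, Y, f, g, h, h𝒳 hX, h𝒴 hY, hT⟩

lemma subset_starSet_of_zero_mem_left {𝒳 𝒴 : Set C} (h0 : (0 : C) ∈ 𝒳) : 𝒴 ⊆ starSet C 𝒳 𝒴 :=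
  fun Y hY => ⟨0, Y, 0, 𝟙 Y, 0, h0, hY, contractible_distinguished₁ Y⟩

lemma subset_starSet_of_zero_mem_right {𝒳 𝒴 : Set C} (h0 : (0 : C) ∈ 𝒴) : 𝒳 ⊆ starSet C 𝒳 𝒴 :=
  fun X hX => ⟨X, 0, 𝟙 X, 0, 0, hX, h0, contractible_distinguished X⟩

namespace IsTStructure

variable {L G : Set C}

lemma shift_one_mem_left (hU : IsTStructure C L G) {X : C} (hX : X ∈ L) : X⟦(1 : ℤ)⟧ ∈ L := by
  obtain ⟨Y, hY, ⟨e⟩⟩ := hU.shiftL hX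
  exact hU.isoL ((shiftFunctor C (1 : ℤ)).mapIso e ≪≫
    (shiftFunctorCompIsoId C (-1 : ℤ) 1 (by norm_num)).app Y).symm hY trivial

lemma isZero_of_mem_left_of_mem_shiftSet (hU : IsTStructure C L G) {X : C} (hL : X ∈ L)
    (hG : X ∈ shiftSet C G (-1)) : IsZero X :=
  (IsZero.iff_id_eq_zero X).2 (hU.hom_zero X hL X hG (𝟙 X))

lemma mem_left_and_mem_right_of_isZero (hU : IsTStructure C L G) {Z : C} (hZ : IsZero Z) :
    Z ∈ L ∧ Z ∈ G := by
  obtain ⟨X, Y, f, g, h, hX, hY, hT⟩ := hU.cover Z trivial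
  have : IsIso h := (Triangle.isZero₂_iff_isIso₃ _ hT).1 hZ
  have hY0 : IsZero Y := hU.isZero_of_mem_left_of_mem_shiftSet
    (hU.isoL (asIso h).symm (hU.shift_one_mem_left hX) trivial) hY
  obtain ⟨Y', hY', ⟨e⟩⟩ := hY
  have hX0 : IsZero X :=
    IsZero.of_full_of_faithful_of_isZero (shiftFunctor C 1) X (hY0.of_iso (asIso h).symm)
  have hY'0 : IsZero Y' :=
    IsZero.of_full_of_faithful_of_isZero (shiftFunctor C (-1)) Y' (hY0.of_iso e.symm)
  exact ⟨hU.isoL (hX0.iso hZ) hX trivial, hU.isoG (hY'0.iso hZ) hY' trivial⟩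

lemma mem_shiftSet_inter_of_isZero (hU : IsTStructure C L G) {Z : C} (hZ : IsZero Z) (k : ℤ) :
    Z ∈ shiftSet C G k ∩ L :=
  let ⟨hL, hG⟩ := hU.mem_left_and_mem_right_of_isZero hZ
  ⟨mem_shiftSet_of_isZero hZ hG k, hL⟩

end IsTStructure

end Pretriangulated

theorem stmt16 (L G : Set D) (hU : IsTStructure D L G) (m : ℤ)
    (H : Set D) (hH : H = shiftSet D G (m - 1) ∩ L)
    (T F : Set D) (hTF : IsSTorsionPairIn D H T F) :
    starSet D (shiftSet D F m) T ⊆ starSet D (shiftSet D H m) H ∧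
    H ⊆ starSet D (starSet D (shiftSet D F m) T)
          (shiftSet D (starSet D (shiftSet D F m) T) (-m)) := by
  have h0H : (0 : D) ∈ H := hH ▸ hU.mem_shiftSet_inter_of_isZero (isZero_zero D) (m - 1)
  have h0T : (0 : D) ∈ T := hTF.zeroT 0 (isZero_zero D) h0H
  have h0Fm : (0 : D) ∈ shiftSet D F m :=
    mem_shiftSet_of_isZero (isZero_zero D) (hTF.zeroF 0 (isZero_zero D) h0H) m
  refine ⟨starSet_mono_s16 (shiftSet_mono hTF.subF m) hTF.subT, fun X hX => ?_⟩
  refine starSet_mono_s16 (subset_starSet_of_zero_mem_left h0Fm) (fun C hC => ?_) (hTF.cover X hX)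
  exact mem_shiftSet_neg_of_shift_mem
    (subset_starSet_of_zero_mem_right h0T (shift_mem_shiftSet_s16 hC m))
end
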